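/- arXiv:0802.1382 — 2 statements merged into one kernel-verified Lean document; each statement's English description precedes it below -/
import Mathlib

section
/- For natural numbers k, n with k < n and n ≥ 1, every maximal chain of the poset P_{k,n} has exactly k + n elements. Consequently P_{k,n} satisfies the Dedekind–Jordan condition (all maximal chains have equal length) and its rank, the number of elements in a maximal chain minus one, equals k + n − 1. -/
/-!
`P_{k,n}` is graded by the rank `l + m - 1`: a cover `(l, m) ⋖ (l', m')` raises exactly one
coordinate by one, since otherwise `(l + 1, m)` or `(l, m + 1)` would lie strictly in between.
A maximal chain inherits this grading, and walking up along covers it attains every rank between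
those of its ends, which are the bottom `(0, 1)` and the top `(k, n)`. So the rank maps it
bijectively onto `[0, k + n - 1]`.
-/

open Set

section Graded

variable {α : Type*}

theorem Icc_grade_subset_image_grade_Icc [PartialOrder α] [GradeOrder ℕ α] {a b : α}
    (hab : a ≤ b) : Icc (grade ℕ a) (grade ℕ b) ⊆ grade ℕ '' Icc a b := by
  rintro r ⟨har, hrb⟩
  induction r, har using Nat.le_induction with
  | base => exact ⟨a, ⟨le_rfl, hab⟩, rfl⟩
  | succ r _ ih =>
    obtain ⟨x, ⟨hax, hxb⟩, rfl⟩ := ih (by omega)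
    have hxb' : x < b := hxb.lt_of_ne (by rintro rfl; omega)
    obtain ⟨y, hxy, hyb⟩ := exists_covBy_le_of_lt hxb'
    exact ⟨y, ⟨hax.trans hxy.le, hyb⟩, (Order.covBy_iff_add_one_eq.mp (hxy.grade ℕ)).symm⟩

theorem nat_card_eq_grade_add_one_sub_grade [LinearOrder α] [GradeOrder ℕ α] {a b : α}
    (ha : IsBot a) (hb : IsTop b) : Nat.card α = grade ℕ b + 1 - grade ℕ a := by
  have hrange : range (grade ℕ : α → ℕ) = Icc (grade ℕ a) (grade ℕ b) := by
    refine Subset.antisymm ?_ fun r hr => ?_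
    · rintro _ ⟨x, rfl⟩
      exact ⟨grade_mono (ha x), grade_mono (hb x)⟩
    · obtain ⟨x, -, hx⟩ := Icc_grade_subset_image_grade_Icc (ha b) hr
      exact ⟨x, hx⟩
  rw [← Nat.card_range_of_injective (grade_injective (𝕆 := ℕ) (α := α)), hrange,
    Nat.card_coe_set_eq, ncard_Icc_nat]

theorem IsMaxChain.ncard_eq_grade_add_one_sub_grade [PartialOrder α] [GradeOrder ℕ α]
    {C : Set α} (hC : IsMaxChain (· ≤ ·) C) {a b : α} (ha : IsBot a) (hb : IsTop b) :
    C.ncard = grade ℕ b + 1 - grade ℕ a := by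
  classical
  let s := Flag.ofIsMaxChain C hC
  have haC : a ∈ s := Flag.mem_iff_forall_le_or_ge.2 fun x _ => .inl (ha x)
  have hbC : b ∈ s := Flag.mem_iff_forall_le_or_ge.2 fun x _ => .inr (hb x)
  rw [← Nat.card_coe_set_eq]
  exact nat_card_eq_grade_add_one_sub_grade (α := s) (a := ⟨a, haC⟩) (b := ⟨b, hbC⟩)
    (fun x => ha x) (fun x => hb x)

end Graded

abbrev Pkn (k n : ℕ) : Type := {p : ℕ × ℕ // p.1 ≤ k ∧ p.2 ≤ n ∧ p.1 < p.2}

namespace Pkn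

variable {k n : ℕ}

theorem fst_add_snd_lt_of_lt {x y : Pkn k n} (h : x < y) : x.1.1 + x.1.2 < y.1.1 + y.1.2 := by
  have := Prod.lt_iff.mp (Subtype.coe_lt_coe.mpr h)
  omega

theorem fst_add_snd_add_one_of_covBy {x y : Pkn k n} (h : x ⋖ y) :
    x.1.1 + x.1.2 + 1 = y.1.1 + y.1.2 := by
  obtain ⟨⟨l, m⟩, hl, hm, hlm⟩ := x
  obtain ⟨⟨l', m'⟩, hl', hm', hlm'⟩ := y
  show l + m + 1 = l' + m'
  obtain ⟨hll', hmm'⟩ : l ≤ l' ∧ m ≤ m' := h.le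
  rcases hmm'.lt_or_eq with hmm | rfl
  · let c : Pkn k n := ⟨(l, m + 1), hl, hmm.trans_le hm', by omega⟩
    have := h.eq_or_eq (c := c) ⟨le_rfl, Nat.le_succ m⟩ ⟨hll', hmm⟩
    simp only [c, Subtype.ext_iff, Prod.mk.injEq] at this
    omega
  · have hll : l < l' := hll'.lt_of_ne (by rintro rfl; exact h.ne rfl)
    let c : Pkn k n := ⟨(l + 1, m), hll.trans_le hl', hm, lt_of_le_of_lt hll hlm'⟩
    have := h.eq_or_eq (c := c) ⟨Nat.le_succ l, le_rfl⟩ ⟨hll, le_rfl⟩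
    simp only [c, Subtype.ext_iff, Prod.mk.injEq] at this
    omega

instance : GradeOrder ℕ (Pkn k n) where
  grade x := x.1.1 + x.1.2 - 1
  grade_strictMono x y h := by
    dsimp only
    have := fst_add_snd_lt_of_lt h
    have := x.2.2.2
    omega
  covBy_grade x y h := by
    rw [Order.covBy_iff_add_one_eq]
    have := fst_add_snd_add_one_of_covBy h
    have := x.2.2.2
    omega

theorem grade_eq (x : Pkn k n) : grade ℕ x = x.1.1 + x.1.2 - 1 := rfl

end Pkn

/-- Observation 3 (Dedekind–Jordan property): for `k < n`, `n ≥ 1`, every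
maximal chain of the poset `P_{k,n}` has exactly `k + n` elements; hence all
maximal chains have equal size and the rank of `P_{k,n}` is `k + n - 1`. -/
theorem maxChain_card_Pkn (k n : ℕ) (hk : k < n) (hn : 1 ≤ n)
    (C : Set {p : ℕ × ℕ // p.1 ≤ k ∧ p.2 ≤ n ∧ p.1 < p.2})
    (hC : IsMaxChain (· ≤ ·) C) :
    C.ncard = k + n := by
  let bot : Pkn k n := ⟨(0, 1), Nat.zero_le _, hn, Nat.zero_lt_one⟩
  let top : Pkn k n := ⟨(k, n), le_rfl, le_rfl, hk⟩
  have hbot : IsBot bot := fun x => ⟨Nat.zero_le _, Nat.zero_lt_of_lt x.2.2.2⟩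
  have htop : IsTop top := fun x => ⟨x.2.1, x.2.2.1⟩
  rw [hC.ncard_eq_grade_add_one_sub_grade hbot htop, Pkn.grade_eq, Pkn.grade_eq]
  dsimp only [bot, top]
  omega
end

section
/- For natural numbers k, n with k < n and n ≥ 1, the number d(k,n) of maximal chains of the poset P_{k,n} satisfies n · d(k,n) = (n − k) · C(n + k − 1, k), where C denotes the binomial coefficient; equivalently, d(k,n) is the ballot number counting monotone lattice paths from (0,1) to (k,n) that stay strictly below the diagonal. -/
/-! Every maximal chain of `P_{k,n}` contains the top `(k, n)` and, right below it, exactly one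
of the lower covers `(k - 1, n)` and `(k, n - 1)` (only the first one exists when `n = k + 1`),
whose down-sets are `P_{k-1,n}` and `P_{k,n-1}`. Hence `d(k,n) = d(k-1,n) + d(k,n-1)` with
`d(0,n) = 1`, and by Pascal's rule `C(n+k-1, k) - C(n+k-1, k-1)` satisfies the same recursion. -/

open Set

section IsMaxChainIn

variable {α : Type*} [PartialOrder α] {S T C : Set α} {a b t : α}

def IsMaxChainIn (S C : Set α) : Prop :=
  Maximal (fun D => D ⊆ S ∧ IsChain (· ≤ ·) D) C

theorem Set.Finite.setOf_isMaxChainIn (hS : S.Finite) : {C | IsMaxChainIn S C}.Finite :=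
  hS.finite_subsets.subset fun _ (hC : IsMaxChainIn S _) => hC.prop.1

theorem ncard_setOf_isMaxChain_subtype (S : Set α) :
    {C : Set S | IsMaxChain (· ≤ ·) C}.ncard = {C | IsMaxChainIn S C}.ncard := by
  have hchain : ∀ D : Set α, (∃ C : Set S, IsChain (· ≤ ·) C ∧ Subtype.val '' C = D) ↔
      D ⊆ S ∧ IsChain (· ≤ ·) D := by
    intro D
    constructor
    · rintro ⟨C, hC, rfl⟩
      exact ⟨Subtype.coe_image_subset S C,
        IsChain.image_embedding_iff (φ := OrderEmbedding.subtype (· ∈ S)) |>.2 hC⟩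
    · rintro ⟨hDS, hD⟩
      refine ⟨Subtype.val ⁻¹' D, ?_, image_preimage_eq_of_subset (by simpa using hDS)⟩
      exact hD.preimage_embedding (OrderEmbedding.subtype (· ∈ S))
  have himage : image Subtype.val '' {C : Set S | IsMaxChain (· ≤ ·) C} =
      {C | IsMaxChainIn S C} := by
    have hmax : {C : Set S | IsMaxChain (· ≤ ·) C} = {C | Maximal (IsChain (· ≤ ·)) C} :=
      ext fun _ => maximal_subset_iff.symm
    rw [hmax, image_monotone_setOfPred_maximal fun _ _ _ _ =>
      image_subset_image_iff Subtype.val_injective]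
    simp_rw [IsMaxChainIn, hchain]
  rw [← himage, (image_injective.2 Subtype.val_injective).injOn.ncard_image]

theorem setOf_isMaxChainIn_eq_singleton (hS : IsChain (· ≤ ·) S) :
    {C | IsMaxChainIn S C} = {S} := by
  ext C
  refine ⟨fun (hC : IsMaxChainIn S C) => hC.eq_of_subset ⟨subset_rfl, hS⟩ hC.prop.1, ?_⟩
  rintro rfl
  exact ⟨⟨subset_rfl, hS⟩, fun D hD _ => hD.1⟩

theorem IsMaxChainIn.mem_of_forall_comparable (hC : IsMaxChainIn S C) (ha : a ∈ S)
    (hcomp : ∀ x ∈ C, x ≤ a ∨ a ≤ x) : a ∈ C :=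
  hC.mem_of_prop_insert
    ⟨insert_subset ha hC.prop.1, hC.prop.2.insert fun x hx _ => (hcomp x hx).symm⟩

theorem IsChain.subset_Iic_of_maximal {D : Set α} (hD : IsChain (· ≤ ·) D) (hDS : D ⊆ S)
    (ha : Maximal (· ∈ S) a) (haD : a ∈ D) : D ⊆ Iic a := by
  intro x hx
  obtain rfl | hne := eq_or_ne x a
  · exact le_rfl
  · exact (hD hx haD hne).elim id fun hax => ha.2 (hDS hx) hax

theorem isMaxChainIn_inter_Iic_iff (ha : Maximal (· ∈ S) a) :
    IsMaxChainIn (S ∩ Iic a) C ↔ IsMaxChainIn S C ∧ a ∈ C := by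
  constructor
  · intro hC
    have haC : a ∈ C := hC.mem_of_forall_comparable ⟨ha.prop, le_rfl⟩
      fun x hx => Or.inl (hC.prop.1 hx).2
    refine ⟨⟨⟨fun x hx => (hC.prop.1 hx).1, hC.prop.2⟩, fun D hD hCD => ?_⟩, haC⟩
    exact hC.2 ⟨subset_inter hD.1 (hD.2.subset_Iic_of_maximal hD.1 ha (hCD haC)), hD.2⟩ hCD
  · rintro ⟨hC, haC⟩
    exact hC.mono (fun D hD => ⟨hD.1.trans inter_subset_left, hD.2⟩)
      ⟨subset_inter hC.prop.1 (hC.prop.2.subset_Iic_of_maximal hC.prop.1 ha haC), hC.prop.2⟩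

theorem setOf_isMaxChainIn_insert_of_forall_lt (ht : ∀ x ∈ T, x < t) :
    {C | IsMaxChainIn (insert t T) C} = insert t '' {C | IsMaxChainIn T C} := by
  have hchain : ∀ {D : Set α}, D ⊆ T → IsChain (· ≤ ·) D → IsChain (· ≤ ·) (insert t D) :=
    fun hDT hD => hD.insert fun x hx _ => Or.inr (ht x (hDT hx)).le
  have htT : t ∉ T := fun h => (ht t h).false
  ext C
  constructor
  · intro (hC : IsMaxChainIn _ C)
    have htC : t ∈ C := hC.mem_of_forall_comparable (mem_insert t T) fun x hx => by
      rcases hC.prop.1 hx with rfl | hxT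
      exacts [Or.inl le_rfl, Or.inl (ht x hxT).le]
    refine ⟨C \ {t}, ⟨⟨fun x hx => (hC.prop.1 hx.1).resolve_left hx.2,
      hC.prop.2.mono sdiff_subset⟩, fun D hD hCD x hx => ?_⟩, insert_sdiff_self_of_mem htC⟩
    have hDC : insert t D ⊆ C := hC.2 ⟨insert_subset_insert hD.1, hchain hD.1 hD.2⟩ fun y hy => by
      by_cases hyt : y = t
      exacts [hyt ▸ mem_insert t D, mem_insert_of_mem t (hCD ⟨hy, hyt⟩)]
    exact ⟨hDC (mem_insert_of_mem t hx), fun hxt => htT (hxt ▸ hD.1 hx)⟩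
  · rintro ⟨C, hC : IsMaxChainIn T C, rfl⟩
    refine ⟨⟨insert_subset_insert hC.prop.1, hchain hC.prop.1 hC.prop.2⟩, fun D hD hCD => ?_⟩
    have hDC : D \ {t} ⊆ C := hC.2
      ⟨fun x hx => (hD.1 hx.1).resolve_left hx.2, hD.2.mono sdiff_subset⟩
      fun x hx => ⟨hCD (mem_insert_of_mem t hx), fun hxt => htT (hxt ▸ hC.prop.1 hx)⟩
    intro x hx
    by_cases hxt : x = t
    exacts [hxt ▸ mem_insert t C, mem_insert_of_mem t (hDC ⟨hx, hxt⟩)]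

theorem ncard_setOf_isMaxChainIn_insert_of_forall_lt (ht : ∀ x ∈ T, x < t) :
    {C | IsMaxChainIn (insert t T) C}.ncard = {C | IsMaxChainIn T C}.ncard := by
  have htT : t ∉ T := fun h => (ht t h).false
  rw [setOf_isMaxChainIn_insert_of_forall_lt ht]
  refine InjOn.ncard_image fun C (hC : IsMaxChainIn T C) D (hD : IsMaxChainIn T D) hCD => ?_
  rw [← insert_sdiff_self_of_notMem fun h => htT (hC.prop.1 h),
    ← insert_sdiff_self_of_notMem fun h => htT (hD.prop.1 h)]
  exact congrArg (· \ {t}) hCD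

theorem IsMaxChainIn.mem_or_mem_of_forall_le_or_le (hC : IsMaxChainIn S C) (ha : a ∈ S)
    (hb : b ∈ S) (hcover : ∀ x ∈ S, x ≤ a ∨ x ≤ b) : a ∈ C ∨ b ∈ C := by
  by_contra! h
  obtain ⟨haC, hbC⟩ := h
  -- some `c ∈ C` is incomparable to `a`, and then everything in `C` lies below `b`
  obtain ⟨c, hcC, hca⟩ : ∃ c ∈ C, ¬ (c ≤ a ∨ a ≤ c) := by
    by_contra! h
    exact haC (hC.mem_of_forall_comparable ha h)
  have hcb : c ≤ b := (hcover c (hC.prop.1 hcC)).resolve_left fun h => hca (Or.inl h)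
  refine hbC (hC.mem_of_forall_comparable hb fun x hxC => Or.inl ?_)
  obtain rfl | hne := eq_or_ne x c
  · exact hcb
  rcases hC.prop.2 hxC hcC hne with hxc | hcx
  · exact hxc.trans hcb
  · exact (hcover x (hC.prop.1 hxC)).resolve_left fun hxa => hca (Or.inl (hcx.trans hxa))

theorem ncard_setOf_isMaxChainIn_of_forall_le_or_le (hS : S.Finite) (ha : a ∈ S) (hb : b ∈ S)
    (hab : ¬ a ≤ b) (hba : ¬ b ≤ a) (hcover : ∀ x ∈ S, x ≤ a ∨ x ≤ b) :
    {C | IsMaxChainIn S C}.ncard =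
      {C | IsMaxChainIn (S ∩ Iic a) C}.ncard + {C | IsMaxChainIn (S ∩ Iic b) C}.ncard := by
  have hmax_a : Maximal (· ∈ S) a :=
    ⟨ha, fun x hx hax => (hcover x hx).resolve_right fun hxb => hab (hax.trans hxb)⟩
  have hmax_b : Maximal (· ∈ S) b :=
    ⟨hb, fun x hx hbx => (hcover x hx).resolve_left fun hxa => hba (hbx.trans hxa)⟩
  have hsplit : {C | IsMaxChainIn S C} =
      {C | IsMaxChainIn (S ∩ Iic a) C} ∪ {C | IsMaxChainIn (S ∩ Iic b) C} := by
    ext C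
    simp only [mem_union, mem_ofPred_eq, isMaxChainIn_inter_Iic_iff hmax_a,
      isMaxChainIn_inter_Iic_iff hmax_b, ← and_or_left, iff_self_and]
    exact fun hC => hC.mem_or_mem_of_forall_le_or_le ha hb hcover
  have hdisj : Disjoint {C | IsMaxChainIn (S ∩ Iic a) C} {C | IsMaxChainIn (S ∩ Iic b) C} := by
    refine disjoint_left.2 fun C hCa hCb => ?_
    obtain ⟨hC, haC⟩ := (isMaxChainIn_inter_Iic_iff hmax_a).1 hCa
    obtain ⟨-, hbC⟩ := (isMaxChainIn_inter_Iic_iff hmax_b).1 hCb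
    exact (hC.prop.2.total haC hbC).elim hab hba
  rw [hsplit, ncard_union_eq hdisj ((hS.inter_of_left _).setOf_isMaxChainIn)
    ((hS.inter_of_left _).setOf_isMaxChainIn)]

end IsMaxChainIn

def ballotPoset (k n : ℕ) : Set (ℕ × ℕ) := {p | p.1 ≤ k ∧ p.2 ≤ n ∧ p.1 < p.2}

namespace ballotPoset

theorem finite (k n : ℕ) : (ballotPoset k n).Finite :=
  (finite_Iic (k, n)).subset fun _ hp => ⟨hp.1, hp.2.1⟩

theorem ncard_maxChains_zero (n : ℕ) : {C | IsMaxChainIn (ballotPoset 0 n) C}.ncard = 1 := by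
  rw [setOf_isMaxChainIn_eq_singleton, ncard_singleton]
  rintro ⟨a, b⟩ ⟨ha, -, -⟩ ⟨c, d⟩ ⟨hc, -, -⟩ -
  simp only [Prod.mk_le_mk]
  omega

theorem ncard_maxChains_subdiagonal (k : ℕ) :
    {C | IsMaxChainIn (ballotPoset (k + 1) (k + 1 + 1)) C}.ncard =
      {C | IsMaxChainIn (ballotPoset k (k + 1 + 1)) C}.ncard := by
  have hinsert : ballotPoset (k + 1) (k + 1 + 1) =
      insert (k + 1, k + 1 + 1) (ballotPoset k (k + 1 + 1)) := by
    ext ⟨a, b⟩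
    simp only [ballotPoset, mem_insert_iff, mem_ofPred_eq, Prod.mk.injEq]
    omega
  rw [hinsert, ncard_setOf_isMaxChainIn_insert_of_forall_lt]
  rintro ⟨a, b⟩ ⟨ha, hb, -⟩
  exact Prod.mk_lt_mk_of_lt_of_le (by omega) hb

theorem ncard_maxChains_succ_succ {k n : ℕ} (hk : k + 1 < n) :
    {C | IsMaxChainIn (ballotPoset (k + 1) (n + 1)) C}.ncard =
      {C | IsMaxChainIn (ballotPoset k (n + 1)) C}.ncard +
        {C | IsMaxChainIn (ballotPoset (k + 1) n) C}.ncard := by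
  set S := ballotPoset k (n + 1) ∪ ballotPoset (k + 1) n
  have hinsert : ballotPoset (k + 1) (n + 1) = insert (k + 1, n + 1) S := by
    ext ⟨a, b⟩
    simp only [S, ballotPoset, mem_insert_iff, mem_union, mem_ofPred_eq, Prod.mk.injEq]
    omega
  have hS_a : S ∩ Iic (k, n + 1) = ballotPoset k (n + 1) := by
    ext ⟨a, b⟩
    simp only [S, ballotPoset, mem_inter_iff, mem_union, mem_ofPred_eq, mem_Iic, Prod.mk_le_mk]
    omega
  have hS_b : S ∩ Iic (k + 1, n) = ballotPoset (k + 1) n := by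
    ext ⟨a, b⟩
    simp only [S, ballotPoset, mem_inter_iff, mem_union, mem_ofPred_eq, mem_Iic, Prod.mk_le_mk]
    omega
  rw [hinsert, ncard_setOf_isMaxChainIn_insert_of_forall_lt, ← hS_a, ← hS_b]
  · refine ncard_setOf_isMaxChainIn_of_forall_le_or_le ((finite _ _).union (finite _ _))
      (Or.inl ⟨le_rfl, le_rfl, by omega⟩) (Or.inr ⟨le_rfl, le_rfl, by omega⟩)
      (by simp) (by simp) ?_
    rintro ⟨a, b⟩ (⟨ha, hb, -⟩ | ⟨ha, hb, -⟩)
    exacts [Or.inl ⟨ha, hb⟩, Or.inr ⟨ha, hb⟩]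
  · rintro ⟨a, b⟩ (⟨ha, hb, -⟩ | ⟨ha, hb, -⟩)
    exacts [Prod.mk_lt_mk_of_lt_of_le (by omega) hb, Prod.mk_lt_mk_of_le_of_lt ha (by omega)]

/-- Here `(m + k).choose (m + 1)` is `C(n+k-1, k-1)` for `n = m + 1`, written so that it
vanishes at `k = 0` instead of being truncated. -/
theorem ncard_maxChains_add_choose {k m : ℕ} (hk : k ≤ m) :
    {C | IsMaxChainIn (ballotPoset k (m + 1)) C}.ncard + (m + k).choose (m + 1) =
      (m + k).choose k := by
  induction k generalizing m with
  | zero => simp [ncard_maxChains_zero]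
  | succ k ih =>
    induction m, hk using Nat.le_induction with
    | base =>
      have hk := ih (m := k + 1) (by omega)
      rw [ncard_maxChains_subdiagonal,
        show k + 1 + (k + 1) = k + 1 + k + 1 by omega, Nat.choose_succ_succ', Nat.choose_succ_succ']
      omega
    | succ m hkm ihm =>
      have hk := ih (m := m + 1) (by omega)
      rw [ncard_maxChains_succ_succ (by omega), show m + 1 + (k + 1) = m + 1 + k + 1 by omega,
        Nat.choose_succ_succ', Nat.choose_succ_succ']
      rw [show m + (k + 1) = m + 1 + k by omega] at ihm
      omega

end ballotPoset

theorem card_maxChains_Pkn_general (k n : ℕ) (hk : k < n) :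
    n * {C : Set {p : ℕ × ℕ // p.1 ≤ k ∧ p.2 ≤ n ∧ p.1 < p.2} |
          IsMaxChain (· ≤ ·) C}.ncard
      = (n - k) * Nat.choose (n + k - 1) k := by
  obtain ⟨m, rfl⟩ : ∃ m, n = m + 1 := ⟨n - 1, by omega⟩
  change (m + 1) * {C : Set (ballotPoset k (m + 1)) | IsMaxChain (· ≤ ·) C}.ncard = _
  have hcount := ballotPoset.ncard_maxChains_add_choose (Nat.lt_succ_iff.1 hk)
  have hchoose : (m + k).choose (m + 1) * (m + 1) = (m + k).choose k * k := by
    rw [Nat.choose_succ_right_eq, Nat.choose_symm_add, Nat.add_sub_cancel_left]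
  rw [ncard_setOf_isMaxChain_subtype, show m + 1 + k - 1 = m + k by omega, Nat.sub_mul]
  refine Nat.eq_sub_of_add_eq ?_
  rw [mul_comm k, ← hchoose, ← hcount]
  ring

/-- Observation 2 (ballot-number form): for `k < n`, `n ≥ 1`, the number
`d(k,n)` of maximal chains of the poset `P_{k,n}` satisfies
`n · d(k,n) = (n - k) · C(n + k - 1, k)`. -/
theorem card_maxChains_Pkn (k n : ℕ) (hk : k < n) (hn : 1 ≤ n) :
    n * {C : Set {p : ℕ × ℕ // p.1 ≤ k ∧ p.2 ≤ n ∧ p.1 < p.2} |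
          IsMaxChain (· ≤ ·) C}.ncard
      = (n - k) * Nat.choose (n + k - 1) k :=
  card_maxChains_Pkn_general k n hk
end
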